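/- arXiv:2210.03512 — 4 statements merged into one kernel-verified Lean document; each statement's English description precedes it below -/
import Mathlib

section
/- Let p be a probability measure on a measurable space X, let α > 0, and let f : X → ℝ be measurable with Z_α := ∫ exp(−α f(x)) dp(x) finite and positive. Define the Gibbs posterior q_α as the probability measure with density exp(−α f)/Z_α with respect to p. Then q_α minimizes the regularized objective: for every probability measure q absolutely continuous with respect to p such that f is q-integrable and KL(q‖p) is finite, one has ∫ f dq_α + (1/α)·KL(q_α‖p) ≤ ∫ f dq + (1/α)·KL(q‖p). -/
/-!
The Gibbs posterior is the tilted measure `p.tilted g` with `g = -α f`. For any `q ≪ p`, the chain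
rule for log-likelihood ratios gives
`∫ g dq - KL(q‖p) = log ∫ exp g dp - KL(q‖p.tilted g)`,
so by Gibbs' inequality the left side is at most `log ∫ exp g dp`, with equality at
`q = p.tilted g` (the Donsker–Varadhan variational principle). Dividing by `-α < 0` gives the claim.
-/

open MeasureTheory

/-- Kullback–Leibler divergence `∫ log (dq/dp) dq` of `q` with respect to `p` (real-valued,
meaningful when `q ≪ p` and the integrand is `q`-integrable, i.e. the KL divergence is finite). -/
noncomputable def KL {X : Type*} [MeasurableSpace X] (q p : Measure X) : ℝ :=
  ∫ x, Real.log ((q.rnDeriv p x).toReal) ∂q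

namespace MeasureTheory

open Real

variable {X : Type*} [MeasurableSpace X] {μ ν : Measure X} {g : X → ℝ}

lemma integral_llr_nonneg [IsProbabilityMeasure μ] [IsProbabilityMeasure ν] (hμν : μ ≪ ν)
    (h_int : Integrable (llr μ ν) μ) : 0 ≤ ∫ x, llr μ ν x ∂μ := by
  simpa using InformationTheory.integral_llr_add_sub_measure_univ_nonneg hμν h_int

lemma integral_sub_integral_llr_tilted_left_self [SigmaFinite ν] [NeZero ν]
    (hg : Integrable (fun x ↦ exp (g x)) ν) (hg_tilted : Integrable g (ν.tilted g)) :
    ∫ x, g x ∂(ν.tilted g) - ∫ x, llr (ν.tilted g) ν x ∂(ν.tilted g)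
      = log (∫ x, exp (g x) ∂ν) := by
  have := isProbabilityMeasure_tilted hg
  have h_llr : llr (ν.tilted g) ν =ᵐ[ν.tilted g] fun x ↦ g x - log (∫ x, exp (g x) ∂ν) :=
    (tilted_absolutelyContinuous ν g).ae_le (log_rnDeriv_tilted_left_self hg)
  rw [integral_congr_ae h_llr, integral_sub hg_tilted (integrable_const _), integral_const,
    probReal_univ, one_smul, sub_sub_cancel]

lemma integral_sub_integral_llr_le_log_integral_exp [IsProbabilityMeasure μ] [SigmaFinite ν]
    (hμν : μ ≪ ν) (hgμ : Integrable g μ) (hg : Integrable (fun x ↦ exp (g x)) ν)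
    (h_int : Integrable (llr μ ν) μ) :
    ∫ x, g x ∂μ - ∫ x, llr μ ν x ∂μ ≤ log (∫ x, exp (g x) ∂ν) := by
  have : NeZero ν := ⟨fun hν ↦ IsProbabilityMeasure.ne_zero μ
    (Measure.absolutelyContinuous_zero_iff.mp (hν ▸ hμν))⟩
  have := isProbabilityMeasure_tilted hg
  have h_gibbs : 0 ≤ ∫ x, llr μ (ν.tilted g) x ∂μ :=
    integral_llr_nonneg (hμν.trans (absolutelyContinuous_tilted hg))
      (integrable_llr_tilted_right hμν hgμ h_int hg)
  rw [integral_llr_tilted_right hμν hgμ hg h_int] at h_gibbs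
  linarith

end MeasureTheory

theorem gibbs_posterior_minimizes_regularized_objective_general
    {X : Type*} [MeasurableSpace X] (p : Measure X) [IsProbabilityMeasure p]
    (α : ℝ) (hα : 0 < α) (f : X → ℝ)
    (hint : Integrable (fun x => Real.exp (-α * f x)) p)
    (Zα : ℝ) (hZα : Zα = ∫ x, Real.exp (-α * f x) ∂p)
    (qα : Measure X)
    (hqα : qα = p.withDensity (fun x => ENNReal.ofReal (Real.exp (-α * f x) / Zα)))
    (hfqα : Integrable f qα) :
    ∀ q : Measure X, IsProbabilityMeasure q → q ≪ p →
      Integrable f q →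
      Integrable (fun x => Real.log ((q.rnDeriv p x).toReal)) q →
      ∫ x, f x ∂qα + (1 / α) * KL qα p ≤ ∫ x, f x ∂q + (1 / α) * KL q p := by
  intro q hq hqp hfq hllrq
  have hqα_tilted : qα = p.tilted (fun x ↦ -α * f x) := by rw [hqα, Measure.tilted, hZα]
  subst hqα_tilted
  have h_opt := integral_sub_integral_llr_tilted_left_self hint (hfqα.const_mul (-α))
  have h_le := integral_sub_integral_llr_le_log_integral_exp hqp (hfq.const_mul (-α)) hint hllrq
  simp only [integral_const_mul] at h_opt h_le
  have h_scale (A L : ℝ) : A + 1 / α * L = -(-α * A - L) / α := by field_simp; ring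
  rw [KL, KL, h_scale, h_scale]
  exact div_le_div_of_nonneg_right (neg_le_neg (h_opt ▸ h_le)) hα.le

/-- The Gibbs posterior `q_α`, with density `exp(-α f)/Z_α` with respect to the prior `p`,
minimizes the regularized objective `∫ f dq + (1/α) KL(q‖p)` over all probability measures
`q ≪ p` with `f` `q`-integrable and finite `KL(q‖p)`. -/
theorem gibbs_posterior_minimizes_regularized_objective
    {X : Type*} [MeasurableSpace X] (p : Measure X) [IsProbabilityMeasure p]
    (α : ℝ) (hα : 0 < α) (f : X → ℝ) (hf : Measurable f)
    (hint : Integrable (fun x => Real.exp (-α * f x)) p)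
    (Zα : ℝ) (hZα : Zα = ∫ x, Real.exp (-α * f x) ∂p) (hZpos : 0 < Zα)
    (qα : Measure X)
    (hqα : qα = p.withDensity (fun x => ENNReal.ofReal (Real.exp (-α * f x) / Zα)))
    (hfqα : Integrable f qα) :
    ∀ q : Measure X, IsProbabilityMeasure q → q ≪ p →
      Integrable f q →
      Integrable (fun x => Real.log ((q.rnDeriv p x).toReal)) q →
      ∫ x, f x ∂qα + (1 / α) * KL qα p ≤ ∫ x, f x ∂q + (1 / α) * KL q p :=
  gibbs_posterior_minimizes_regularized_objective_general p α hα f hint Zα hZα qα hqα hfqα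
end

section
/- (Importance sampling concentration inequality.) Let p and q be probability measures on a measurable space X with q absolutely continuous with respect to p, with importance weight w = dq/dp, and suppose the exponentiated Rényi-2 divergence d₂(q‖p) = ∫ (dq/dp)² dp is finite. Let X₁, …, X_N be i.i.d. random variables with law p, and let f : X → ℝ be a bounded measurable function with sup norm ‖f‖_∞ < ∞. Then for any 0 < δ ≤ 1 and N ≥ 1, with probability at least 1 − δ: ∫ f dq ≥ (1/N)·Σ_{i=1}^N w(X_i) f(X_i) − ‖f‖_∞ · √((1 − δ)·d₂(q‖p) / (δ·N)). -/
/-!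
The summands `w(Xᵢ) f(Xᵢ)` are i.i.d. with mean `∫ f dq` (change of measure) and variance at
most `C² d₂`, so their sample mean has variance `σ² ≤ C² d₂ / N`. Cantelli's one-sided Chebyshev
inequality `P(Ȳ ≥ E Ȳ + t) ≤ σ² / (σ² + t²)` bounds the probability of the complementary
event, and the threshold `t = C √((1 - δ) d₂ / (δ N))` is exactly the one making that bound
equal to `δ` when `σ² = C² d₂ / N`. The threshold is positive because `d₂ ≥ (∫ w dp)² = 1`.
-/

open MeasureTheory ProbabilityTheory

theorem MeasureTheory.Measure.ofReal_one_sub_le_of_measureReal_compl_le {Ω : Type*}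
    [MeasurableSpace Ω] {μ : Measure Ω} [IsProbabilityMeasure μ]
    {A : Set Ω} {δ : ℝ} (h : μ.real Aᶜ ≤ δ) : ENNReal.ofReal (1 - δ) ≤ μ A := by
  refine ENNReal.ofReal_le_of_le_toReal ?_
  have := measureReal_union_le (μ := μ) A Aᶜ
  rw [Set.union_compl_self, probReal_univ] at this
  rw [← measureReal_def]
  linarith

namespace ProbabilityTheory

variable {Ω : Type*} [MeasurableSpace Ω] {μ : Measure Ω}

theorem sq_add_mul_measureReal_ge_add_le [IsProbabilityMeasure μ] {Y : Ω → ℝ}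
    (hY : MemLp Y 2 μ) {t u : ℝ} (htu : 0 ≤ t + u) :
    (t + u) ^ 2 * μ.real {ω | μ[Y] + t ≤ Y ω} ≤ Var[Y; μ] + u ^ 2 := by
  set Z : Ω → ℝ := fun ω ↦ Y ω + (u - μ[Y])
  have hZ : MemLp Z 2 μ := hY.add (memLp_const _)
  have hZ_sq : ∫ ω, Z ω ^ 2 ∂μ = Var[Y; μ] + u ^ 2 := by
    have hvar := variance_eq_sub hZ
    rw [variance_add_const hY.aestronglyMeasurable, integral_add (hY.integrable one_le_two)
      (integrable_const _)] at hvar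
    simp only [integral_const, probReal_univ, smul_eq_mul, one_mul, add_sub_cancel] at hvar
    simp only [hvar, Pi.pow_apply, sub_add_cancel]
  calc (t + u) ^ 2 * μ.real {ω | μ[Y] + t ≤ Y ω}
      ≤ (t + u) ^ 2 * μ.real {ω | (t + u) ^ 2 ≤ Z ω ^ 2} := by
        refine mul_le_mul_of_nonneg_left (measureReal_mono fun ω hω ↦ ?_) (sq_nonneg _)
        exact pow_le_pow_left₀ htu (by simp only [Set.mem_ofPred_eq, Z] at hω ⊢; linarith) 2
    _ ≤ ∫ ω, Z ω ^ 2 ∂μ :=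
        mul_meas_ge_le_integral_of_nonneg (ae_of_all _ fun ω ↦ sq_nonneg _) hZ.integrable_sq _
    _ = Var[Y; μ] + u ^ 2 := hZ_sq

/-- **Cantelli's inequality**. -/
theorem measureReal_ge_add_le_variance_div [IsProbabilityMeasure μ] {Y : Ω → ℝ}
    (hY : MemLp Y 2 μ) {t : ℝ} (ht : 0 < t) :
    μ.real {ω | μ[Y] + t ≤ Y ω} ≤ Var[Y; μ] / (Var[Y; μ] + t ^ 2) := by
  have hV := variance_nonneg Y μ
  -- the shift `u = Var Y / t` optimizes the bound of `sq_add_mul_measureReal_ge_add_le`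
  have h := sq_add_mul_measureReal_ge_add_le hY (u := Var[Y; μ] / t) (by positivity)
  rw [le_div_iff₀ (by positivity)]
  have hlhs : (t + Var[Y; μ] / t) ^ 2 = (Var[Y; μ] + t ^ 2) / t ^ 2 * (Var[Y; μ] + t ^ 2) := by
    field_simp; ring
  have hrhs : Var[Y; μ] + (Var[Y; μ] / t) ^ 2 = (Var[Y; μ] + t ^ 2) / t ^ 2 * Var[Y; μ] := by
    field_simp; ring
  rw [hlhs, hrhs, mul_assoc] at h
  rw [mul_comm]
  exact le_of_mul_le_mul_left h (by positivity)

theorem variance_mul_le_sq_mul_integral_sq [IsProbabilityMeasure μ] {h f : Ω → ℝ}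
    (hh : AEStronglyMeasurable h μ) (hf : AEStronglyMeasurable f μ) {C : ℝ}
    (hfC : ∀ ω, |f ω| ≤ C) (hh2 : Integrable (fun ω ↦ h ω ^ 2) μ) :
    Var[fun ω ↦ h ω * f ω; μ] ≤ C ^ 2 * ∫ ω, h ω ^ 2 ∂μ := by
  refine (variance_le_expectation_sq (hh.mul hf)).trans ?_
  rw [← integral_const_mul]
  refine integral_mono_of_nonneg (ae_of_all _ fun ω ↦ sq_nonneg _) (hh2.const_mul _)
    (ae_of_all _ fun ω ↦ ?_)
  have := sq_le_sq' (neg_le_of_abs_le (hfC ω)) (le_of_abs_le (hfC ω))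
  simp only [Pi.pow_apply, Pi.mul_apply, mul_pow, mul_comm (C ^ 2)]
  exact mul_le_mul_of_nonneg_left this (sq_nonneg _)

section IID

variable {X ι : Type*} [MeasurableSpace X] [Fintype ι] {p : Measure X} {Xs : ι → Ω → X}
  {g : X → ℝ}

theorem HasLaw.memLp_comp {Y : Ω → X} (hY : HasLaw Y p μ) {q : ENNReal} (hg : MemLp g q p) :
    MemLp (fun ω ↦ g (Y ω)) q μ := by
  rw [← hY.map_eq] at hg
  exact hg.comp_of_map hY.aemeasurable

theorem integral_sum_comp_of_hasLaw (hlaw : ∀ i, HasLaw (Xs i) p μ) (hg : Integrable g p) :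
    ∫ ω, ∑ i, g (Xs i ω) ∂μ = Fintype.card ι * ∫ x, g x ∂p := by
  rw [integral_finsetSum _ fun i _ ↦ ?_]
  · have h : ∀ i, ∫ ω, g (Xs i ω) ∂μ = ∫ x, g x ∂p := fun i ↦
      (hlaw i).integral_comp hg.aestronglyMeasurable
    simp only [h, Finset.sum_const, Finset.card_univ, nsmul_eq_mul]
  · rw [← memLp_one_iff_integrable] at hg ⊢
    exact (hlaw i).memLp_comp hg

theorem variance_sum_comp_of_iIndepFun (hindep : iIndepFun Xs μ)
    (hlaw : ∀ i, HasLaw (Xs i) p μ) (hg : MemLp g 2 p) :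
    Var[fun ω ↦ ∑ i, g (Xs i ω); μ] = Fintype.card ι * Var[g; p] := by
  have hcomp : iIndepFun (fun i ↦ g ∘ Xs i) μ :=
    hindep.comp₀ _ (fun i ↦ (hlaw i).aemeasurable)
      (fun i ↦ (hlaw i).map_eq ▸ hg.aestronglyMeasurable.aemeasurable)
  have hsum := IndepFun.variance_sum (s := Finset.univ) (fun i _ ↦ (hlaw i).memLp_comp hg)
    fun i _ j _ hij ↦ hcomp.indepFun hij
  have hvar : ∀ i, Var[g ∘ Xs i; μ] = Var[g; p] := fun i ↦ by
    rw [← variance_map ((hlaw i).map_eq ▸ hg.aestronglyMeasurable.aemeasurable)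
      (hlaw i).aemeasurable, (hlaw i).map_eq]
  simp only [Function.comp_def] at hvar hsum
  convert hsum using 1
  · congr 1; ext ω; simp
  · simp [hvar]

theorem measureReal_integral_add_le_sampleMean_le [IsProbabilityMeasure μ] [Nonempty ι]
    (hindep : iIndepFun Xs μ) (hlaw : ∀ i, HasLaw (Xs i) p μ) (hg : MemLp g 2 p) {t : ℝ}
    (ht : 0 < t) :
    μ.real {ω | ∫ x, g x ∂p + t ≤ 1 / (Fintype.card ι : ℝ) * ∑ i, g (Xs i ω)} ≤
      Var[g; p] / (Var[g; p] + Fintype.card ι * t ^ 2) := by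
  have hn : (0 : ℝ) < Fintype.card ι := by exact_mod_cast Fintype.card_pos
  have : IsProbabilityMeasure p :=
    (hlaw (Classical.arbitrary ι)).isProbabilityMeasure_iff.1 ‹_›
  have hmean : MemLp (fun ω ↦ 1 / (Fintype.card ι : ℝ) * ∑ i, g (Xs i ω)) 2 μ :=
    (memLp_finsetSum _ fun i _ ↦ (hlaw i).memLp_comp hg).const_mul _
  have hint : μ[fun ω ↦ 1 / (Fintype.card ι : ℝ) * ∑ i, g (Xs i ω)] = ∫ x, g x ∂p := by
    rw [integral_const_mul, integral_sum_comp_of_hasLaw hlaw (hg.integrable one_le_two)]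
    field_simp
  have hvar : Var[fun ω ↦ 1 / (Fintype.card ι : ℝ) * ∑ i, g (Xs i ω); μ] =
      Var[g; p] / Fintype.card ι := by
    rw [variance_const_mul, variance_sum_comp_of_iIndepFun hindep hlaw hg]
    field_simp
  calc _ ≤ _ := hint ▸ measureReal_ge_add_le_variance_div hmean ht
    _ = Var[g; p] / (Var[g; p] + Fintype.card ι * t ^ 2) := by
      rw [hvar]
      field_simp

end IID

end ProbabilityTheory

namespace MeasureTheory

variable {X : Type*} [MeasurableSpace X] {p q : Measure X}

theorem memLp_two_toReal_rnDeriv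
    (h : Integrable (fun x ↦ (q.rnDeriv p x).toReal ^ 2) p) :
    MemLp (fun x ↦ (q.rnDeriv p x).toReal) 2 p :=
  (memLp_two_iff_integrable_sq
    (Measure.measurable_rnDeriv q p).ennreal_toReal.aestronglyMeasurable).2 h

theorem one_le_integral_toReal_rnDeriv_sq [IsProbabilityMeasure p] [IsProbabilityMeasure q]
    (hqp : q ≪ p) (h : Integrable (fun x ↦ (q.rnDeriv p x).toReal ^ 2) p) :
    1 ≤ ∫ x, (q.rnDeriv p x).toReal ^ 2 ∂p := by
  have hvar := variance_eq_sub (memLp_two_toReal_rnDeriv h)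
  rw [Measure.integral_toReal_rnDeriv hqp, probReal_univ] at hvar
  have := variance_nonneg (fun x ↦ (q.rnDeriv p x).toReal) p
  simp only [Pi.pow_apply] at hvar
  linarith

end MeasureTheory

theorem div_add_mul_sq_threshold_le {V C d δ n : ℝ} (hV₀ : 0 ≤ V) (hV : V ≤ C ^ 2 * d)
    (hd : 0 ≤ d) (hδ : 0 < δ) (hδ1 : δ ≤ 1) (hn : 0 < n) :
    V / (V + n * (C * √((1 - δ) * d / (δ * n))) ^ 2) ≤ δ := by
  have hδ1' : 0 ≤ 1 - δ := sub_nonneg.2 hδ1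
  have ht2 : n * (C * √((1 - δ) * d / (δ * n))) ^ 2 = C ^ 2 * d * (1 - δ) / δ := by
    rw [mul_pow, Real.sq_sqrt (by positivity)]
    field_simp
  refine div_le_of_le_mul₀ (by positivity) hδ.le ?_
  rw [ht2, mul_add, mul_div_cancel₀ _ hδ.ne']
  nlinarith

/-- Importance sampling concentration inequality: if `q ≪ p` with importance weight
`w = dq/dp` and finite exponentiated Rényi-2 divergence `d₂ = ∫ w² dp`, and `X₁, …, X_N`
are i.i.d. with law `p`, then for any bounded measurable `f` (with `|f| ≤ C = ‖f‖_∞`) and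
any `0 < δ ≤ 1`, with probability at least `1 - δ`,
`∫ f dq ≥ (1/N) ∑ᵢ w(Xᵢ) f(Xᵢ) - C √((1-δ) d₂ / (δ N))`. -/
theorem importance_sampling_concentration
    {X : Type*} [mX : MeasurableSpace X] (p q : Measure X)
    [IsProbabilityMeasure p] [IsProbabilityMeasure q] (hqp : q ≪ p)
    (w : X → ℝ) (hw : w = fun x => (q.rnDeriv p x).toReal)
    (d₂ : ℝ) (hd₂ : d₂ = ∫ x, (w x) ^ 2 ∂p)
    (hd₂fin : Integrable (fun x => (w x) ^ 2) p)
    {Ω : Type*} [MeasurableSpace Ω] (μ : Measure Ω) [IsProbabilityMeasure μ]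
    (N : ℕ) (hN : 1 ≤ N)
    (Xs : Fin N → Ω → X) (hmeas : ∀ i, Measurable (Xs i))
    (hindep : ProbabilityTheory.iIndepFun Xs μ)
    (hlaw : ∀ i, μ.map (Xs i) = p)
    (f : X → ℝ) (hf : Measurable f) (C : ℝ) (hfC : ∀ x, |f x| ≤ C)
    (δ : ℝ) (hδ : 0 < δ) (hδ1 : δ ≤ 1) :
    ENNReal.ofReal (1 - δ) ≤
      μ {ω | (1 / (N : ℝ)) * ∑ i, w (Xs i ω) * f (Xs i ω)
              - C * Real.sqrt ((1 - δ) * d₂ / (δ * N)) ≤ ∫ x, f x ∂q} := by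
  rcases hδ1.eq_or_lt with rfl | hδ1
  · simp
  rcases ((abs_nonneg _).trans (hfC (nonempty_of_isProbabilityMeasure p).some)).eq_or_lt
    with rfl | hC
  · obtain rfl : f = 0 := funext fun x ↦ abs_nonpos_iff.mp (hfC x)
    simpa using hδ.le
  subst hw
  have hd₂pos : 0 < d₂ :=
    hd₂ ▸ (one_le_integral_toReal_rnDeriv_sq hqp hd₂fin).trans_lt' one_pos
  have hw2 := memLp_two_toReal_rnDeriv hd₂fin
  have hg : MemLp (fun x ↦ (q.rnDeriv p x).toReal * f x) 2 p :=
    (memLp_top_of_bound hf.aestronglyMeasurable C (ae_of_all _ hfC)).mul' hw2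
  have hV : Var[fun x ↦ (q.rnDeriv p x).toReal * f x; p] ≤ C ^ 2 * d₂ :=
    hd₂ ▸ variance_mul_le_sq_mul_integral_sq hw2.aestronglyMeasurable hf.aestronglyMeasurable
      hfC hd₂fin
  have : NeZero N := ⟨by omega⟩
  have hdev := measureReal_integral_add_le_sampleMean_le hindep
    (fun i ↦ ⟨(hmeas i).aemeasurable, hlaw i⟩) hg
    (t := C * √((1 - δ) * d₂ / (δ * N))) (by positivity)
  rw [integral_toReal_rnDeriv_mul hqp, Fintype.card_fin] at hdev
  refine μ.ofReal_one_sub_le_of_measureReal_compl_le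
    ((measureReal_mono fun ω hω ↦ ?_).trans (hdev.trans ?_))
  · simp only [Set.mem_compl_iff, Set.mem_ofPred_eq, not_le] at hω ⊢
    linarith
  · exact div_add_mul_sq_threshold_le (variance_nonneg _ _) hV hd₂pos.le hδ hδ1.le
      (by positivity)
end

section
/- (Effective sample size estimates the exponentiated Rényi-2 divergence.) Let p and q be probability measures on a measurable space X with q absolutely continuous with respect to p, importance weight w = dq/dp, and finite exponentiated Rényi-2 divergence d₂(q‖p) = ∫ (dq/dp)² dp, and assume d₂(q‖p) > 0. Let X₁, X₂, … be i.i.d. random variables with law p. Then almost surely, (1/N) · (Σ_{n=1}^N w(X_n))² / (Σ_{n=1}^N w(X_n)²) converges to 1 / d₂(q‖p) as N → ∞. -/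
/-!
The strong law of large numbers, applied to the i.i.d. sequences `w(Xₙ)` and `w(Xₙ)²`, gives
almost surely `(1/N) ∑ w(Xₙ) → ∫ w dp = q(X) = 1` and `(1/N) ∑ w(Xₙ)² → d₂(q‖p)`. The effective
sample size divided by `N` is the square of the first average over the second, so it tends to
`1 / d₂(q‖p)`.
-/

open MeasureTheory Filter ProbabilityTheory Finset

theorem tendsto_inv_mul_sq_div_of_tendsto_div_natCast {s t : ℕ → ℝ} {a b : ℝ}
    (hs : Tendsto (fun N : ℕ => s N / N) atTop (nhds a))
    (ht : Tendsto (fun N : ℕ => t N / N) atTop (nhds b)) (hb : b ≠ 0) :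
    Tendsto (fun N : ℕ => 1 / (N : ℝ) * s N ^ 2 / t N) atTop (nhds (a ^ 2 / b)) := by
  refine ((hs.pow 2).div ht hb).congr' ?_
  filter_upwards [eventually_ne_atTop 0] with N hN
  have hN' : (N : ℝ) ≠ 0 := Nat.cast_ne_zero.mpr hN
  rcases eq_or_ne (t N) 0 with ht0 | ht0
  · simp [ht0]
  · simp only [Pi.div_apply, div_pow]
    field_simp

theorem strong_law_ae_comp {X Ω : Type*} [MeasurableSpace X] [MeasurableSpace Ω]
    {μ : Measure Ω} {p : Measure X} {Xs : ℕ → Ω → X} (hmeas : ∀ n, Measurable (Xs n))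
    (hindep : Pairwise fun i j => IndepFun (Xs i) (Xs j) μ) (hlaw : ∀ n, μ.map (Xs n) = p)
    {f : X → ℝ} (hf : Measurable f) (hfint : Integrable f p) :
    ∀ᵐ ω ∂μ, Tendsto (fun N : ℕ => (∑ n ∈ range N, f (Xs n ω)) / N) atTop
      (nhds (∫ x, f x ∂p)) := by
  have hident : ∀ n, IdentDistrib (f ∘ Xs n) (f ∘ Xs 0) μ μ := fun n =>
    (IdentDistrib.mk (hmeas n).aemeasurable (hmeas 0).aemeasurable (by rw [hlaw n, hlaw 0])).comp hf
  have hint : Integrable (f ∘ Xs 0) μ := by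
    rw [← integrable_map_measure hf.aestronglyMeasurable (hmeas 0).aemeasurable, hlaw 0]
    exact hfint
  have hmean : ∫ ω, (f ∘ Xs 0) ω ∂μ = ∫ x, f x ∂p := by
    rw [← hlaw 0, integral_map (hmeas 0).aemeasurable hf.aestronglyMeasurable]
    rfl
  rw [← hmean]
  exact strong_law_ae_real (fun n => f ∘ Xs n) hint (fun i j hij => (hindep hij).comp hf hf) hident

theorem effective_sample_size_estimates_renyi2_general
    {X : Type*} [mX : MeasurableSpace X] (p q : Measure X)
    [IsProbabilityMeasure p] [IsProbabilityMeasure q] (hqp : q ≪ p)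
    (w : X → ℝ) (hw : w = fun x => (q.rnDeriv p x).toReal)
    (d₂ : ℝ) (hd₂ : d₂ = ∫ x, (w x) ^ 2 ∂p)
    (hd₂fin : Integrable (fun x => (w x) ^ 2) p) (hd₂pos : 0 < d₂)
    {Ω : Type*} [MeasurableSpace Ω] (μ : Measure Ω)
    (Xs : ℕ → Ω → X) (hmeas : ∀ n, Measurable (Xs n))
    (hindep : ProbabilityTheory.iIndepFun Xs μ)
    (hlaw : ∀ n, μ.map (Xs n) = p) :
    ∀ᵐ ω ∂μ, Tendsto
      (fun N : ℕ => (1 / (N : ℝ)) *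
        (∑ n ∈ Finset.range N, w (Xs n ω)) ^ 2 / (∑ n ∈ Finset.range N, (w (Xs n ω)) ^ 2))
      atTop (nhds (1 / d₂)) := by
  subst hw hd₂
  have hwm : Measurable fun x => (q.rnDeriv p x).toReal :=
    (Measure.measurable_rnDeriv q p).ennreal_toReal
  have hpair : Pairwise fun i j => IndepFun (Xs i) (Xs j) μ := fun i j hij => hindep.indepFun hij
  have hmean := strong_law_ae_comp hmeas hpair hlaw hwm Measure.integrable_toReal_rnDeriv
  have hsq := strong_law_ae_comp hmeas hpair hlaw (hwm.pow_const 2) hd₂fin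
  have hmass : ∫ x, (q.rnDeriv p x).toReal ∂p = 1 := by
    simp [Measure.integral_toReal_rnDeriv hqp]
  filter_upwards [hmean, hsq] with ω hmean hsq
  rw [hmass] at hmean
  simpa using tendsto_inv_mul_sq_div_of_tendsto_div_natCast hmean hsq hd₂pos.ne'

/-- The effective sample size estimates the exponentiated Rényi-2 divergence: for `q ≪ p`
with importance weight `w = dq/dp` and finite, positive `d₂(q‖p) = ∫ w² dp`, and i.i.d.
samples `X₁, X₂, …` from `p`, almost surely
`(1/N) (∑_{n<N} w(Xₙ))² / (∑_{n<N} w(Xₙ)²) → 1 / d₂(q‖p)` as `N → ∞`. -/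
theorem effective_sample_size_estimates_renyi2
    {X : Type*} [mX : MeasurableSpace X] (p q : Measure X)
    [IsProbabilityMeasure p] [IsProbabilityMeasure q] (hqp : q ≪ p)
    (w : X → ℝ) (hw : w = fun x => (q.rnDeriv p x).toReal)
    (d₂ : ℝ) (hd₂ : d₂ = ∫ x, (w x) ^ 2 ∂p)
    (hd₂fin : Integrable (fun x => (w x) ^ 2) p) (hd₂pos : 0 < d₂)
    {Ω : Type*} [MeasurableSpace Ω] (μ : Measure Ω) [IsProbabilityMeasure μ]
    (Xs : ℕ → Ω → X) (hmeas : ∀ n, Measurable (Xs n))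
    (hindep : ProbabilityTheory.iIndepFun Xs μ)
    (hlaw : ∀ n, μ.map (Xs n) = p) :
    ∀ᵐ ω ∂μ, Tendsto
      (fun N : ℕ => (1 / (N : ℝ)) *
        (∑ n ∈ Finset.range N, w (Xs n ω)) ^ 2 / (∑ n ∈ Finset.range N, (w (Xs n ω)) ^ 2))
      atTop (nhds (1 / d₂)) :=
  effective_sample_size_estimates_renyi2_general (mX := mX) p q hqp w hw d₂ hd₂ hd₂fin hd₂pos μ Xs
    hmeas hindep hlaw
end

section
/- Let N ≥ 1 and let r₁, …, r_N be real numbers with r_n ≤ 0 for all n. Then the function g(α) = √(Σ_{n=1}^N exp(2·α·r_n)) is convex in α on the interval [0, ∞): for all α, β ≥ 0 and θ ∈ [0, 1], g(θα + (1−θ)β) ≤ θ·g(α) + (1−θ)·g(β). -/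
/-! Each weight `α ↦ exp (α rₙ)` is a nonnegative convex function, and `g` is the Euclidean norm
of the weight vector, `g(α) = √(∑ₙ exp (α rₙ) ^ 2)`. The Euclidean norm is convex and, on the
nonnegative orthant, monotone in each coordinate, so it preserves convexity of nonnegative
convex components. -/

open Real

theorem convexOn_sqrt_sum_sq (ι : Type*) [Fintype ι] :
    ConvexOn ℝ Set.univ (fun v : ι → ℝ => √(∑ i, v i ^ 2)) := by
  have h := (convexOn_norm (E := EuclideanSpace ℝ ι) convex_univ).comp_linearMap
    (WithLp.linearEquiv 2 ℝ (ι → ℝ)).symm.toLinearMap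
  rw [Set.preimage_univ] at h
  refine ⟨convex_univ, fun x _ y _ a b ha hb hab => ?_⟩
  simpa [EuclideanSpace.norm_eq] using h.2 (Set.mem_univ x) (Set.mem_univ y) ha hb hab

theorem ConvexOn.sqrt_sum_sq {ι E : Type*} [Fintype ι] [AddCommMonoid E] [Module ℝ E]
    {s : Set E} {f : ι → E → ℝ} (hs : Convex ℝ s) (hf : ∀ i, ConvexOn ℝ s (f i))
    (hf₀ : ∀ i, ∀ x ∈ s, 0 ≤ f i x) :
    ConvexOn ℝ s (fun x => √(∑ i, f i x ^ 2)) := by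
  refine ⟨hs, fun x hx y hy a b ha hb hab => ?_⟩
  calc √(∑ i, f i (a • x + b • y) ^ 2)
      ≤ √(∑ i, (a • f i x + b • f i y) ^ 2) := by
        gcongr with i
        · exact hf₀ i _ (hs hx hy ha hb hab)
        · exact (hf i).2 hx hy ha hb hab
    _ ≤ a • √(∑ i, f i x ^ 2) + b • √(∑ i, f i y ^ 2) :=
        (convexOn_sqrt_sum_sq ι).2 (Set.mem_univ _) (Set.mem_univ _) ha hb hab

theorem convexOn_exp_mul (c : ℝ) : ConvexOn ℝ Set.univ (fun x => exp (x * c)) :=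
  convexOn_exp.comp_linearMap ((LinearMap.id : ℝ →ₗ[ℝ] ℝ).smulRight c)

theorem lbps_penalty_convex_general (N : ℕ) (r : Fin N → ℝ) :
    ConvexOn ℝ (Set.Ici (0 : ℝ))
      (fun α : ℝ => Real.sqrt (∑ n, Real.exp (2 * α * r n))) := by
  have hsq : ∀ α n, exp (2 * α * r n) = exp (α * r n) ^ 2 := fun α n => by
    rw [← exp_nat_mul]
    ring_nf
  simp only [hsq]
  exact (ConvexOn.sqrt_sum_sq convex_univ (fun n => convexOn_exp_mul (r n))
    fun n _ _ => (exp_pos _).le).subset (Set.subset_univ _) (convex_Ici 0)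

/-- For nonpositive returns `r₁, …, r_N`, the penalty term
`g(α) = √(∑ₙ exp(2 α rₙ))` of the lower-bound policy search objective is convex
in `α` on `[0, ∞)`. -/
theorem lbps_penalty_convex (N : ℕ) (hN : 1 ≤ N) (r : Fin N → ℝ) (hr : ∀ n, r n ≤ 0) :
    ConvexOn ℝ (Set.Ici (0 : ℝ))
      (fun α : ℝ => Real.sqrt (∑ n, Real.exp (2 * α * r n))) :=
  lbps_penalty_convex_general N r
end
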